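/- arXiv:1201.3444 — 2 statements merged into one kernel-verified Lean document; each statement's English description precedes it below -/
import Mathlib

section
/- (Gibbs–Thomson relation as a solvability condition) Under the assumptions of the Fredholm solvability fact, let T₀ ∈ L²_loc(ℝ) be such that z ↦ T₀(z)ν'(φ₀(z))φ₀'(z) is integrable (ν ∈ C¹_b(ℝ)), and suppose u ∈ H²(ℝ) solves u'' - W''(φ₀)u = (ᾱv - H)·φ₀' - γ̄·ν'(φ₀)·T₀ for real constants ᾱ, v, H, γ̄. Then σ₀·(ᾱv - H) = γ̄·∫_ℝ T₀(z)·(ν∘φ₀)'(z) dz, where σ₀ := ∫_ℝ (φ₀'(z))² dz. -/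
/-!
Testing the equation against `φ₀'` kills its left-hand side: `∂² - W''(φ₀)` is symmetric on
`H²(ℝ)`, because `u'φ₀' - uφ₀''` is an integrable primitive of `u''φ₀' - uφ₀'''` and hence the
latter integrates to zero, while differentiating `φ₀'' = W'(φ₀)` shows that `φ₀'` lies in the
kernel. What remains of the right-hand side is `(ᾱv - H)σ₀ - γ̄ ∫ T₀ ν'(φ₀) φ₀'`.
-/

open MeasureTheory

noncomputable section

/-- `f ∈ H²(ℝ)` (for twice differentiable representatives):
`f`, `f'`, `f''` all belong to `L²(ℝ)`. -/
def memH2line (f : ℝ → ℝ) : Prop :=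
  MemLp f 2 (volume : Measure ℝ) ∧ MemLp (deriv f) 2 (volume : Measure ℝ) ∧
    MemLp (deriv (deriv f)) 2 (volume : Measure ℝ)

theorem integrable_mul_of_memLp_two {α : Type*} [MeasurableSpace α] {μ : Measure α}
    {f g : α → ℝ} (hf : MemLp f 2 μ) (hg : MemLp g 2 μ) :
    Integrable (fun x => f x * g x) μ :=
  hf.integrable_mul hg

theorem integral_deriv_deriv_mul_eq_integral_mul_deriv_deriv {f g : ℝ → ℝ}
    (hf : Differentiable ℝ f) (hf' : Differentiable ℝ (deriv f))
    (hg : Differentiable ℝ g) (hg' : Differentiable ℝ (deriv g))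
    (hfH : memH2line f) (hgH : memH2line g) :
    ∫ x, deriv (deriv f) x * g x = ∫ x, f x * deriv (deriv g) x := by
  have hprimitive : ∀ x, HasDerivAt (fun x => deriv f x * g x - f x * deriv g x)
      (deriv (deriv f) x * g x - f x * deriv (deriv g) x) x := fun x =>
    (((hf' x).hasDerivAt.mul (hg x).hasDerivAt).sub
      ((hf x).hasDerivAt.mul (hg' x).hasDerivAt)).congr_deriv (by ring)
  have hf''g := integrable_mul_of_memLp_two hfH.2.2 hgH.1
  have hfg'' := integrable_mul_of_memLp_two hfH.1 hgH.2.2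
  have hzero := integral_eq_zero_of_hasDerivAt_of_integrable hprimitive (hf''g.sub hfg'')
    ((integrable_mul_of_memLp_two hfH.2.1 hgH.1).sub (integrable_mul_of_memLp_two hfH.1 hgH.2.1))
  rwa [integral_sub hf''g hfg'', sub_eq_zero] at hzero

theorem hasDerivAt_deriv_deriv_of_deriv_deriv_eq_comp {W φ : ℝ → ℝ}
    (hW : Differentiable ℝ (deriv W)) (hφ : Differentiable ℝ φ)
    (heq : ∀ z, deriv (deriv φ) z = deriv W (φ z)) (z : ℝ) :
    HasDerivAt (deriv (deriv φ)) (deriv (deriv W) (φ z) * deriv φ z) z := by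
  rw [funext heq]
  exact (hW (φ z)).hasDerivAt.comp z (hφ z).hasDerivAt

theorem integral_linearized_mul_deriv_eq_zero {W φ u : ℝ → ℝ} (hW : Differentiable ℝ (deriv W))
    (hφ : ContDiff ℝ 2 φ) (hφH : memH2line (deriv φ))
    (heq : ∀ z, deriv (deriv φ) z = deriv W (φ z))
    (hu : ContDiff ℝ 2 u) (huH : memH2line u) :
    ∫ z, (deriv (deriv u) z - deriv (deriv W) (φ z) * u z) * deriv φ z = 0 := by
  have hφ''' := hasDerivAt_deriv_deriv_of_deriv_deriv_eq_comp hW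
    (hφ.differentiable two_ne_zero) heq
  have hkernel : ∀ z, deriv (deriv (deriv φ)) z = deriv (deriv W) (φ z) * deriv φ z :=
    fun z => (hφ''' z).deriv
  have hsymm := integral_deriv_deriv_mul_eq_integral_mul_deriv_deriv
    (hu.differentiable two_ne_zero) hu.differentiable_deriv_two
    hφ.differentiable_deriv_two (fun z => (hφ''' z).differentiableAt) huH hφH
  calc ∫ z, (deriv (deriv u) z - deriv (deriv W) (φ z) * u z) * deriv φ z
      = ∫ z, (deriv (deriv u) z * deriv φ z - u z * deriv (deriv (deriv φ)) z) := by
        congr 1 with z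
        rw [hkernel]
        ring
    _ = 0 := by
      rw [integral_sub (integrable_mul_of_memLp_two huH.2.2 hφH.1)
        (integrable_mul_of_memLp_two huH.1 hφH.2.2), hsymm, sub_self]

theorem statement10_general (W ν : ℝ → ℝ) (hW : ContDiff ℝ 2 W)
    (hν : ContDiff ℝ 1 ν)
    (φ₀ : ℝ → ℝ) (hφ : ContDiff ℝ 2 φ₀) (hφ' : memH2line (deriv φ₀))
    (heq : ∀ z : ℝ, deriv (deriv φ₀) z = deriv W (φ₀ z))
    (T₀ : ℝ → ℝ)
    (hT₀int : Integrable (fun z => T₀ z * deriv ν (φ₀ z) * deriv φ₀ z) (volume : Measure ℝ))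
    (ᾱ v H γ' : ℝ)
    (u : ℝ → ℝ) (huC : ContDiff ℝ 2 u) (hu : memH2line u)
    (hLu : ∀ z : ℝ, deriv (deriv u) z - deriv (deriv W) (φ₀ z) * u z =
      (ᾱ * v - H) * deriv φ₀ z - γ' * deriv ν (φ₀ z) * T₀ z) :
    (∫ z : ℝ, (deriv φ₀ z) ^ 2) * (ᾱ * v - H) =
      γ' * ∫ z : ℝ, T₀ z * deriv (fun w => ν (φ₀ w)) z := by
  have hsolv := integral_linearized_mul_deriv_eq_zero hW.differentiable_deriv_two hφ hφ' heq huC hu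
  have hchain : ∀ z, deriv (fun w => ν (φ₀ w)) z = deriv ν (φ₀ z) * deriv φ₀ z := fun z =>
    ((hν.differentiable one_ne_zero (φ₀ z)).hasDerivAt.comp z
      (hφ.differentiable two_ne_zero z).hasDerivAt).deriv
  have hσ₀ : Integrable (fun z => deriv φ₀ z ^ 2) (volume : Measure ℝ) := by
    simpa only [sq] using integrable_mul_of_memLp_two hφ'.1 hφ'.1
  simp_rw [hLu] at hsolv
  calc (∫ z, deriv φ₀ z ^ 2) * (ᾱ * v - H)
      = γ' * ∫ z, T₀ z * deriv ν (φ₀ z) * deriv φ₀ z := by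
        rw [← sub_eq_zero, ← hsolv, mul_comm (∫ z, deriv φ₀ z ^ 2), ← integral_const_mul,
          ← integral_const_mul, ← integral_sub (hσ₀.const_mul _) (hT₀int.const_mul _)]
        congr 1 with z
        ring
    _ = γ' * ∫ z, T₀ z * deriv (fun w => ν (φ₀ w)) z := by
        simp only [hchain, mul_assoc]

/-- Gibbs–Thomson relation as a solvability condition: if
`u'' - W''(φ₀)u = (ᾱv - H)φ₀' - γ̄ ν'(φ₀) T₀` is solvable with `u ∈ H²(ℝ)`, then
`σ₀ (ᾱv - H) = γ̄ ∫ T₀ (ν∘φ₀)'`, where `σ₀ = ∫ (φ₀')²`. -/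
theorem statement10 (W ν : ℝ → ℝ) (hW : ContDiff ℝ 2 W)
    (hWb : ∃ M : ℝ, ∀ x, |W x| + |deriv W x| + |deriv (deriv W) x| ≤ M)
    (hν : ContDiff ℝ 1 ν) (hνb : ∃ M : ℝ, ∀ x, |ν x| + |deriv ν x| ≤ M)
    (φ₀ : ℝ → ℝ) (hφ : ContDiff ℝ 2 φ₀) (hφ' : memH2line (deriv φ₀))
    (hφne : deriv φ₀ ≠ 0)
    (heq : ∀ z : ℝ, deriv (deriv φ₀) z = deriv W (φ₀ z))
    (T₀ : ℝ → ℝ) (hT₀meas : Measurable T₀)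
    (hT₀loc : LocallyIntegrable (fun z => (T₀ z) ^ 2) (volume : Measure ℝ))
    (hT₀int : Integrable (fun z => T₀ z * deriv ν (φ₀ z) * deriv φ₀ z) (volume : Measure ℝ))
    (ᾱ v H γ' : ℝ)
    (u : ℝ → ℝ) (huC : ContDiff ℝ 2 u) (hu : memH2line u)
    (hLu : ∀ z : ℝ, deriv (deriv u) z - deriv (deriv W) (φ₀ z) * u z =
      (ᾱ * v - H) * deriv φ₀ z - γ' * deriv ν (φ₀ z) * T₀ z) :
    (∫ z : ℝ, (deriv φ₀ z) ^ 2) * (ᾱ * v - H) =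
      γ' * ∫ z : ℝ, T₀ z * deriv (fun w => ν (φ₀ w)) z :=
  statement10_general W ν hW hν φ₀ hφ hφ' heq T₀ hT₀int ᾱ v H γ' u huC hu hLu
end
end

section
/- (Formal entropy production identity) Let φ, T be smooth functions on an open set of ℝ^d × ℝ with T + θ > 0, satisfying ∂_tφ = -α μ_g and ∂_t T + β(μ_g - (θ+T)∂μ_g/∂T)∂_tφ = (1/Pe)ΔT, where μ_g = W'(φ) - (1/(β·St))·ν'(φ)·T/θ - ε²Δφ (so ∂μ_g/∂T = -(1/(β·St·θ))ν'(φ)). Define s := (1/(St·θ))ν(φ) + log(T + θ). Then ∂_t s = (1/Pe)·div(∇T/(T+θ)) + (1/Pe)·|∇T|²/(T+θ)² + (β/(α(T+θ)))·(∂_tφ)². -/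
open MeasureTheory Real Set Filter

noncomputable section

abbrev Euc (d : ℕ) := EuclideanSpace ℝ (Fin d)

/-- Time derivative `∂_t f` of `f : ℝ^d × ℝ → ℝ`. -/
def dt {d : ℕ} (f : Euc d × ℝ → ℝ) (p : Euc d × ℝ) : ℝ :=
  deriv (fun s => f (p.1, s)) p.2

/-- Spatial gradient `∇f` of `f : ℝ^d × ℝ → ℝ`. -/
def gradx {d : ℕ} (f : Euc d × ℝ → ℝ) (p : Euc d × ℝ) : Euc d :=
  gradient (fun y => f (y, p.2)) p.1

/-- Spatial Laplacian `Δf` of `f : ℝ^d × ℝ → ℝ`. -/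
def lapx {d : ℕ} (f : Euc d × ℝ → ℝ) (p : Euc d × ℝ) : ℝ :=
  ∑ i : Fin d, iteratedFDeriv ℝ 2 (fun y => f (y, p.2)) p.1
    ![EuclideanSpace.single i 1, EuclideanSpace.single i 1]

/-- Spatial divergence `div V` of a vector field `V : ℝ^d × ℝ → ℝ^d`. -/
def divx {d : ℕ} (V : Euc d × ℝ → Euc d) (p : Euc d × ℝ) : ℝ :=
  ∑ i : Fin d, fderiv ℝ (fun y => V (y, p.2) i) p.1 (EuclideanSpace.single i 1)

lemma grad_apply {d : ℕ} (f : Euc d → ℝ) (x : Euc d) (i : Fin d) :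
    gradient f x i = fderiv ℝ f x (EuclideanSpace.single i 1) := by
  have h1 : (inner ℝ (gradient f x) (EuclideanSpace.single i 1 : Euc d) : ℝ)
      = fderiv ℝ f x (EuclideanSpace.single i 1) :=
    InnerProductSpace.toDual_symm_apply
  rw [← h1, EuclideanSpace.inner_single_right]
  simp

lemma norm_sq_eq {d : ℕ} (g : Euc d) : ‖g‖ ^ 2 = ∑ i, g i * g i := by
  rw [← real_inner_self_eq_norm_sq]
  simp only [PiLp.inner_apply, RCLike.inner_apply, conj_trivial]

lemma div_lemma {d : ℕ} (θ : ℝ) (f : Euc d → ℝ) (hf : ContDiff ℝ (⊤ : ℕ∞) f) (x : Euc d)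
    (hne : f x + θ ≠ 0) :
    ∑ i : Fin d, fderiv ℝ (fun y => (f y + θ)⁻¹ * gradient f y i) x
        (EuclideanSpace.single i 1)
      = (f x + θ)⁻¹ *
          (∑ i : Fin d, iteratedFDeriv ℝ 2 f x
            ![EuclideanSpace.single i 1, EuclideanSpace.single i 1])
        - ((f x + θ) ^ 2)⁻¹ * ‖gradient f x‖ ^ 2 := by
  classical
  set g := fderiv ℝ f with hg
  have hgg : ContDiff ℝ (⊤ : ℕ∞) g := hf.fderiv_right (by simp)
  have hB : HasFDerivAt (fun y => (f y + θ)⁻¹)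
      ((ContinuousLinearMap.smulRight (1 : ℝ →L[ℝ] ℝ) (-((f x + θ) ^ 2)⁻¹)).comp (g x)) x := by
    have := (hasFDerivAt_inv hne).comp x
      (((hf.differentiable (by simp) x).hasFDerivAt).add_const θ)
    rw [ContinuousLinearMap.smulRight_one_eq_toSpanSingleton]
    exact this
  have key : ∀ i : Fin d,
      fderiv ℝ (fun y => (f y + θ)⁻¹ * gradient f y i) x (EuclideanSpace.single i 1)
      = (f x + θ)⁻¹ * (fderiv ℝ g x (EuclideanSpace.single i 1) (EuclideanSpace.single i 1))
        + g x (EuclideanSpace.single i 1) *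
          (g x (EuclideanSpace.single i 1) * -((f x + θ) ^ 2)⁻¹) := by
    intro i
    have hrw : (fun y => (f y + θ)⁻¹ * gradient f y i)
        = fun y => (f y + θ)⁻¹ * g y (EuclideanSpace.single i 1) := by
      funext y; rw [grad_apply]
    rw [hrw]
    have hA : HasFDerivAt (fun y => g y (EuclideanSpace.single i 1))
        ((g x).comp (0 : Euc d →L[ℝ] Euc d)
          + (fderiv ℝ g x).flip (EuclideanSpace.single i 1)) x :=
      ((hgg.differentiable (by simp) x).hasFDerivAt).clm_apply
        (hasFDerivAt_const _ _)
    have hprod : HasFDerivAt (fun y => (f y + θ)⁻¹ * g y (EuclideanSpace.single i 1)) _ x :=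
      hB.mul hA
    rw [hprod.fderiv]
    simp [mul_comm]
  rw [Finset.sum_congr rfl (fun i _ => key i), Finset.sum_add_distrib,
    ← Finset.mul_sum, norm_sq_eq]
  have h2 : ∀ i : Fin d,
      iteratedFDeriv ℝ 2 f x ![EuclideanSpace.single i 1, EuclideanSpace.single i 1]
      = fderiv ℝ g x (EuclideanSpace.single i 1) (EuclideanSpace.single i 1) := by
    intro i; rw [iteratedFDeriv_two_apply]; simp [hg]
  rw [Finset.sum_congr rfl (fun i _ => h2 i)]
  simp only [grad_apply]
  have h3 : ∀ i : Fin d, g x (EuclideanSpace.single i 1) *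
      (g x (EuclideanSpace.single i 1) * -((f x + θ) ^ 2)⁻¹)
      = -(((f x + θ) ^ 2)⁻¹ *
        (g x (EuclideanSpace.single i 1) * g x (EuclideanSpace.single i 1))) := fun i => by ring
  rw [Finset.sum_congr rfl (fun i _ => h3 i), Finset.sum_neg_distrib, ← Finset.mul_sum]
  ring

lemma dt_entropy {d : ℕ} (c θ : ℝ) (ν : ℝ → ℝ) (hν : ContDiff ℝ 2 ν)
    (φ T : Euc d × ℝ → ℝ) (hφ : ContDiff ℝ (⊤ : ℕ∞) φ) (hT : ContDiff ℝ (⊤ : ℕ∞) T)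
    (p : Euc d × ℝ) (hne : T p + θ ≠ 0) :
    dt (fun q => c * ν (φ q) + Real.log (T q + θ)) p
      = c * (deriv ν (φ p) * dt φ p) + dt T p / (T p + θ) := by
  have hφt : HasDerivAt (fun s => φ (p.1, s)) (dt φ p) p.2 :=
    ((hφ.comp (contDiff_prodMk_right p.1)).differentiable (by simp) p.2).hasDerivAt
  have hTt : HasDerivAt (fun s => T (p.1, s)) (dt T p) p.2 :=
    ((hT.comp (contDiff_prodMk_right p.1)).differentiable (by simp) p.2).hasDerivAt
  have hν' : HasDerivAt ν (deriv ν (φ p)) (φ (p.1, p.2)) := by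
    have := (hν.differentiable (by norm_num) (φ (p.1, p.2))).hasDerivAt
    simpa using this
  have h1 : HasDerivAt (fun s => c * ν (φ (p.1, s)))
      (c * (deriv ν (φ p) * dt φ p)) p.2 := (hν'.comp p.2 hφt).const_mul c
  have h2 : HasDerivAt (fun s => Real.log (T (p.1, s) + θ))
      (dt T p / (T p + θ)) p.2 := by
    have := (hTt.add_const θ).log (by simpa using hne)
    simpa using this
  exact (h1.add h2).deriv

/-- formal entropy production identity: for smooth solutions of the
nondimensionalized phase field system with `T + θ > 0`, the entropy
`s = ν(φ)/(St·θ) + log(T+θ)` satisfies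
`∂_t s = (1/Pe)div(∇T/(T+θ)) + (1/Pe)|∇T|²/(T+θ)² + (β/(α(T+θ)))(∂_tφ)²`. -/
theorem statement11 (d : ℕ) (α β ε θ Pe St : ℝ)
    (hα : 0 < α) (hβ : 0 < β) (hε : 0 < ε) (hθ : 0 < θ) (hPe : 0 < Pe) (hSt : 0 < St)
    (W ν : ℝ → ℝ) (hW : ContDiff ℝ 2 W) (hν : ContDiff ℝ 2 ν)
    (U : Set (Euc d × ℝ)) (hU : IsOpen U)
    (φ T : Euc d × ℝ → ℝ) (hφ : ContDiff ℝ (⊤ : ℕ∞) φ) (hT : ContDiff ℝ (⊤ : ℕ∞) T)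
    (hpos : ∀ p ∈ U, 0 < T p + θ)
    (μg : Euc d × ℝ → ℝ)
    (hμg : ∀ p, μg p =
      deriv W (φ p) - (1 / (β * St)) * deriv ν (φ p) * T p / θ - ε ^ 2 * lapx φ p)
    (heq1 : ∀ p ∈ U, dt φ p = -α * μg p)
    (heq2 : ∀ p ∈ U, dt T p +
        β * (μg p + (θ + T p) * (1 / (β * St * θ)) * deriv ν (φ p)) * dt φ p =
      (1 / Pe) * lapx T p) :
    ∀ p ∈ U,
      dt (fun q => (1 / (St * θ)) * ν (φ q) + Real.log (T q + θ)) p =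
        (1 / Pe) * divx (fun q => (T q + θ)⁻¹ • gradx T q) p +
          (1 / Pe) * ‖gradx T p‖ ^ 2 / (T p + θ) ^ 2 +
          (β / (α * (T p + θ))) * (dt φ p) ^ 2 := by
  intro p hp
  have hne : T p + θ ≠ 0 := (hpos p hp).ne'
  set f : Euc d → ℝ := fun y => T (y, p.2) with hf
  have hfc : ContDiff ℝ (⊤ : ℕ∞) f := hT.comp (contDiff_prodMk_left p.2)
  have hfx : f p.1 + θ ≠ 0 := by simpa [hf] using hne
  have hdiv : divx (fun q => (T q + θ)⁻¹ • gradx T q) p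
      = (T p + θ)⁻¹ * lapx T p - ((T p + θ) ^ 2)⁻¹ * ‖gradx T p‖ ^ 2 := by
    have hrw : ∀ i : Fin d, (fun y => ((T (y, p.2) + θ)⁻¹ • gradx T (y, p.2)) i)
        = fun y => (f y + θ)⁻¹ * gradient f y i := by
      intro i; funext y; rfl
    have := div_lemma θ f hfc p.1 hfx
    unfold divx
    simp only [hrw]
    rw [this]
    rfl
  rw [dt_entropy (1/(St*θ)) θ ν hν φ T hφ hT p hne, hdiv]
  have hm : μg p = -(dt φ p) / α := by
    have h := heq1 p hp
    field_simp
    linarith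
  have hb : dt T p = (1 / Pe) * lapx T p -
      β * (-(dt φ p) / α + (θ + T p) * (1 / (β * St * θ)) * deriv ν (φ p)) * dt φ p := by
    have h := heq2 p hp
    rw [hm] at h
    linarith
  rw [hb]
  field_simp
  ring
end
end
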